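/- arXiv:2410.14216 — 3 statements merged into one kernel-verified Lean document; each statement's English description precedes it below -/
import Mathlib

section
/- Let Fo > 0, θ_l ∈ ℝ, λ₀ > 0 with erf(λ₀) ≠ 0, and define θ_left(t, x) = θ_l · (1 − erf(x/(2√(t·Fo)))/erf(λ₀)) for t > 0 and x ∈ ℝ. Then θ_left satisfies the heat equation ∂_t θ_left(t, x) = Fo · ∂_xx θ_left(t, x) at every point (t, x) with t > 0. -/
/-- The error function `erf x = (2/√π) ∫₀ˣ e^{−s²} ds`. -/
noncomputable def erf (x : ℝ) : ℝ :=
  (2 / Real.sqrt Real.pi) * ∫ s in (0:ℝ)..x, Real.exp (-s ^ 2)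

/-- The complementary error function `erfc = 1 - erf`. -/
noncomputable def erfc (x : ℝ) : ℝ := 1 - erf x

/-- Liquid-phase branch of the exact self-similar Stefan solution. -/
noncomputable def thetaLeft (Fo θl lam0 t x : ℝ) : ℝ :=
  θl * (1 - erf (x / (2 * Real.sqrt (t * Fo))) / erf lam0)

/-- Solid-phase branch of the exact self-similar Stefan solution. -/
noncomputable def thetaRight (Fo θr lam0 t x : ℝ) : ℝ :=
  θr * (1 - erfc (x / (2 * Real.sqrt (t * Fo))) / erfc lam0)

/-- The liquid–solid interface `λ(t) = 2lam0√(t·Fo)`. -/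
noncomputable def interface (Fo lam0 t : ℝ) : ℝ := 2 * lam0 * Real.sqrt (t * Fo)

/-- The exact self-similar solution of the two-phase Stefan problem. -/
noncomputable def thetaEx (Fo θl θr lam0 t x : ℝ) : ℝ :=
  if x ≤ interface Fo lam0 t then thetaLeft Fo θl lam0 t x else thetaRight Fo θr lam0 t x

/-!
In the similarity variable `ξ = x / (2√(Fo·t))` a function `u = f ξ` has
`∂ₜu = -ξ f'(ξ) / (2t)` and `Fo ∂ₓₓu = f''(ξ) / (4t)`, so the heat equation reduces to the
ODE `f'' = -2ξ f'`. The profile `θ_l (1 - erf ξ / erf λ₀)` solves it, because its derivative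
is a multiple of the Gaussian `e^{-ξ²}`.
-/

open Real

lemma hasDerivAt_erf (x : ℝ) : HasDerivAt erf (2 / √π * exp (-x ^ 2)) x := by
  have hc : Continuous fun s : ℝ => exp (-s ^ 2) := by fun_prop
  exact (intervalIntegral.integral_hasDerivAt_right (hc.intervalIntegrable 0 x)
    hc.stronglyMeasurable.stronglyMeasurableAtFilter hc.continuousAt).const_mul _

lemma hasDerivAt_const_mul_exp_neg_sq (a x : ℝ) :
    HasDerivAt (fun s => a * exp (-s ^ 2)) (-2 * x * (a * exp (-x ^ 2))) x := by
  refine ((((hasDerivAt_pow 2 x).neg).exp).const_mul a).congr_deriv ?_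
  simp only [Pi.neg_apply, Nat.cast_ofNat]
  ring

lemma hasDerivAt_comp_div_const {f : ℝ → ℝ} {f' c x : ℝ} (hf : HasDerivAt f f' (x / c)) :
    HasDerivAt (fun y => f (y / c)) (f' / c) x := by
  have h : HasDerivAt (fun y => f (y / c)) _ x := hf.comp x ((hasDerivAt_id x).div_const c)
  simpa [div_eq_mul_inv, mul_comm] using h

lemma hasDerivAt_div_two_sqrt_mul {κ t : ℝ} (hκ : 0 < κ) (ht : 0 < t) (x : ℝ) :
    HasDerivAt (fun τ => x / (2 * √(τ * κ))) (-(x / (2 * √(t * κ))) / (2 * t)) t := by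
  have htκ : 0 < t * κ := mul_pos ht hκ
  have hsqrt := ((hasDerivAt_id t).mul_const κ).sqrt htκ.ne'
  refine ((hasDerivAt_const t x).div (hsqrt.const_mul 2) (by positivity)).congr_deriv ?_
  simp only [id]
  field_simp
  rw [Real.sq_sqrt htκ.le]
  ring

theorem heat_equation_of_self_similar_profile {f f' : ℝ → ℝ} (hf : ∀ ξ, HasDerivAt f (f' ξ) ξ)
    (hf' : ∀ ξ, HasDerivAt f' (-2 * ξ * f' ξ) ξ) {κ t : ℝ} (hκ : 0 < κ) (ht : 0 < t) (x : ℝ) :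
    deriv (fun τ => f (x / (2 * √(τ * κ)))) t =
      κ * deriv (deriv fun y => f (y / (2 * √(t * κ)))) x := by
  have htime : HasDerivAt (fun τ => f (x / (2 * √(τ * κ)))) _ t :=
    (hf _).comp t (hasDerivAt_div_two_sqrt_mul hκ ht x)
  have hc : (2 * √(t * κ)) ^ 2 = 4 * (t * κ) := by
    rw [mul_pow, Real.sq_sqrt (mul_pos ht hκ).le]; norm_num
  rw [htime.deriv]
  generalize 2 * √(t * κ) = c at hc ⊢
  have hc0 : c ≠ 0 := by rintro rfl; nlinarith [mul_pos ht hκ]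
  have hspace : deriv (fun y => f (y / c)) = fun y => f' (y / c) / c :=
    funext fun y => (hasDerivAt_comp_div_const (hf (y / c))).deriv
  rw [hspace, ((hasDerivAt_comp_div_const (hf' (x / c))).div_const c).deriv, div_div, ← sq, hc]
  field_simp
  ring

theorem thetaLeft_heat_general (Fo θl lam0 : ℝ) (hFo : 0 < Fo) :
    ∀ t : ℝ, 0 < t → ∀ x : ℝ,
      deriv (fun τ => thetaLeft Fo θl lam0 τ x) t =
        Fo * deriv (deriv (fun y => thetaLeft Fo θl lam0 t y)) x := by
  intro t ht x
  have hprofile : ∀ ξ, HasDerivAt (fun ξ => θl * (1 - erf ξ / erf lam0))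
      (-(θl / erf lam0) * (2 / √π * exp (-ξ ^ 2))) ξ := fun ξ =>
    ((((hasDerivAt_erf ξ).div_const _).const_sub 1).const_mul θl).congr_deriv (by ring)
  have hprofile' : ∀ ξ, HasDerivAt (fun ξ => -(θl / erf lam0) * (2 / √π * exp (-ξ ^ 2)))
      (-2 * ξ * (-(θl / erf lam0) * (2 / √π * exp (-ξ ^ 2)))) ξ := fun ξ => by
    simpa only [mul_assoc] using hasDerivAt_const_mul_exp_neg_sq (-(θl / erf lam0) * (2 / √π)) ξ
  exact heat_equation_of_self_similar_profile hprofile hprofile' hFo ht x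

/-- The liquid branch `θ_left` satisfies the heat equation `∂_t θ = Fo ∂_xx θ` for `t > 0`. -/
theorem thetaLeft_heat (Fo θl lam0 : ℝ) (hFo : 0 < Fo) (hlam0 : 0 < lam0) (herf : erf lam0 ≠ 0) :
    ∀ t : ℝ, 0 < t → ∀ x : ℝ,
      deriv (fun τ => thetaLeft Fo θl lam0 τ x) t =
        Fo * deriv (deriv (fun y => thetaLeft Fo θl lam0 t y)) x :=
  thetaLeft_heat_general Fo θl lam0 hFo
end

section
/- Let Fo > 0, θ_l, θ_r ∈ ℝ, λ₀ > 0 with erf(λ₀) ≠ 0 and erfc(λ₀) ≠ 0, λ(t) = 2λ₀√(t·Fo), and let θ_ex(t, x) = θ_l·(1 − erf(x/(2√(t·Fo)))/erf(λ₀)) if x ≤ λ(t) and θ_ex(t, x) = θ_r·(1 − erfc(x/(2√(t·Fo)))/erfc(λ₀)) otherwise. Then for every fixed x > 0, θ_ex(t, x) → θ_r as t → 0⁺. -/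
/-! Since the interface `2 λ₀ √(t Fo)` shrinks to `0`, a fixed point `x > 0` eventually lies in the
solid phase; there the similarity variable `x / (2 √(t Fo))` tends to `+∞`, where `erfc` vanishes. -/

open Filter Topology

theorem tendsto_erf_atTop : Tendsto erf atTop (𝓝 1) := by
  have hgauss : ∫ s in Set.Ioi (0 : ℝ), Real.exp (-s ^ 2) = √Real.pi / 2 := by
    simpa using integral_gaussian_Ioi 1
  have hint : MeasureTheory.IntegrableOn (fun s : ℝ => Real.exp (-s ^ 2)) (Set.Ioi 0) := by
    simpa using (integrable_exp_neg_mul_sq one_pos).integrableOn (s := Set.Ioi 0)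
  have hlim := (MeasureTheory.intervalIntegral_tendsto_integral_Ioi 0 hint tendsto_id).const_mul
    (2 / √Real.pi)
  rwa [hgauss, div_mul_div_cancel₀' two_ne_zero, div_self (by positivity)] at hlim

theorem tendsto_erfc_atTop : Tendsto erfc atTop (𝓝 0) := by
  have h := tendsto_erf_atTop.const_sub 1
  rwa [sub_self] at h

theorem tendsto_two_mul_sqrt_mul_nhdsGT_zero {c : ℝ} (hc : 0 < c) :
    Tendsto (fun t => 2 * √(t * c)) (𝓝[>] 0) (𝓝[>] 0) := by
  refine tendsto_nhdsWithin_iff.2 ⟨?_, ?_⟩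
  · have : Continuous fun t : ℝ => 2 * √(t * c) := by fun_prop
    exact (this.tendsto' 0 0 (by simp)).mono_left nhdsWithin_le_nhds
  · filter_upwards [self_mem_nhdsWithin] with t ht
    exact mul_pos two_pos (Real.sqrt_pos.2 (mul_pos ht hc))

theorem tendsto_thetaRight_nhdsGT_zero {Fo : ℝ} (θr lam0 : ℝ) (hFo : 0 < Fo) {x : ℝ}
    (hx : 0 < x) : Tendsto (fun t => thetaRight Fo θr lam0 t x) (𝓝[>] 0) (𝓝 θr) := by
  have hsimilarity : Tendsto (fun t => x / (2 * √(t * Fo))) (𝓝[>] 0) atTop := by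
    simpa only [div_eq_mul_inv, Pi.inv_apply] using
      (tendsto_two_mul_sqrt_mul_nhdsGT_zero hFo).inv_tendsto_nhdsGT_zero.const_mul_atTop hx
  simpa [thetaRight] using
    (((tendsto_erfc_atTop.comp hsimilarity).div_const (erfc lam0)).const_sub 1).const_mul θr

theorem continuous_interface (Fo lam0 : ℝ) : Continuous (interface Fo lam0) := by
  unfold interface
  fun_prop

theorem eventually_interface_lt (Fo lam0 : ℝ) {x : ℝ} (hx : 0 < x) :
    ∀ᶠ t in 𝓝 0, interface Fo lam0 t < x :=
  (continuous_interface Fo lam0).continuousAt.eventually_lt continuousAt_const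
    (by simpa [interface] using hx)

theorem thetaEx_eq_thetaRight_of_interface_lt {Fo θl θr lam0 t x : ℝ}
    (h : interface Fo lam0 t < x) : thetaEx Fo θl θr lam0 t x = thetaRight Fo θr lam0 t x :=
  if_neg h.not_ge

theorem thetaEx_initial_condition_general (Fo θl θr lam0 : ℝ) (hFo : 0 < Fo) :
    ∀ x : ℝ, 0 < x →
      Filter.Tendsto (fun t => thetaEx Fo θl θr lam0 t x)
        (nhdsWithin 0 (Set.Ioi 0)) (nhds θr) := by
  intro x hx
  refine (tendsto_thetaRight_nhdsGT_zero θr lam0 hFo hx).congr' ?_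
  filter_upwards [nhdsWithin_le_nhds (eventually_interface_lt Fo lam0 hx)] with t ht
  exact (thetaEx_eq_thetaRight_of_interface_lt ht).symm

/-- At each fixed interior point `x > 0`, `θ_ex(t,x) → θ_r` as `t → 0⁺`:
the exact solution attains the uniform initial temperature `θ_r`. -/
theorem thetaEx_initial_condition (Fo θl θr lam0 : ℝ) (hFo : 0 < Fo) (hlam0 : 0 < lam0)
    (herf : erf lam0 ≠ 0) (herfc : erfc lam0 ≠ 0) :
    ∀ x : ℝ, 0 < x →
      Filter.Tendsto (fun t => thetaEx Fo θl θr lam0 t x)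
        (nhdsWithin 0 (Set.Ioi 0)) (nhds θr) :=
  thetaEx_initial_condition_general Fo θl θr lam0 hFo
end

section
/- Let Fo > 0, θ_l > 0, θ_r < 0, λ₀ > 0, λ(t) = 2λ₀√(t·Fo), and let θ_ex(t, x) = θ_l·(1 − erf(x/(2√(t·Fo)))/erf(λ₀)) if x ≤ λ(t) and θ_ex(t, x) = θ_r·(1 − erfc(x/(2√(t·Fo)))/erfc(λ₀)) otherwise. Then for every t > 0 and x ≥ 0: θ_ex(t, x) > 0 if x < λ(t), θ_ex(t, x) = 0 if x = λ(t), and θ_ex(t, x) < 0 if x > λ(t). -/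
open MeasureTheory Set

lemma gauss_integrable : Integrable (fun s : ℝ => Real.exp (-s ^ 2)) := by
  simpa [neg_mul, one_mul] using integrable_exp_neg_mul_sq (one_pos)

lemma erf_strictMono : StrictMono erf := by
  intro a b hab
  unfold erf
  have hc : (0:ℝ) < 2 / Real.sqrt Real.pi :=
    div_pos two_pos (Real.sqrt_pos.mpr Real.pi_pos)
  apply mul_lt_mul_of_pos_left _ hc
  have hI : ∀ u v : ℝ, IntervalIntegrable (fun s => Real.exp (-s ^ 2)) volume u v :=
    fun u v => gauss_integrable.intervalIntegrable
  have : (0:ℝ) < ∫ s in a..b, Real.exp (-s ^ 2) := by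
    apply intervalIntegral.intervalIntegral_pos_of_pos_on (hI a b) (fun x _ => Real.exp_pos _) hab
  have hsub := intervalIntegral.integral_interval_sub_left (hI 0 b) (hI 0 a)
  linarith [hsub]

lemma erf_zero : erf 0 = 0 := by simp [erf]

lemma erf_pos {x : ℝ} (hx : 0 < x) : 0 < erf x := by
  simpa [erf_zero] using erf_strictMono hx

lemma erf_lt_one (x : ℝ) : erf x < 1 := by
  rcases le_or_gt x 0 with hx | hx
  · calc erf x ≤ erf 0 := (erf_strictMono.le_iff_le).mpr hx
    _ < 1 := by simp [erf_zero]
  · unfold erf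
    rw [intervalIntegral.integral_of_le hx.le]
    have hunion : Ioc (0:ℝ) x ∪ Ioi x = Ioi (0:ℝ) := Ioc_union_Ioi_eq_Ioi hx.le
    have hsplit : (∫ s in Ioc (0:ℝ) x, Real.exp (-s ^ 2)) + ∫ s in Ioi x, Real.exp (-s ^ 2)
        = ∫ s in Ioi (0:ℝ), Real.exp (-s ^ 2) := by
      rw [← hunion]
      exact (setIntegral_union (Ioc_disjoint_Ioi le_rfl) measurableSet_Ioi
        gauss_integrable.integrableOn gauss_integrable.integrableOn).symm
    have htot : (∫ s in Ioi (0:ℝ), Real.exp (-s ^ 2)) = Real.sqrt Real.pi / 2 := by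
      simpa [neg_mul, one_mul] using integral_gaussian_Ioi 1
    have hpos : (0:ℝ) < ∫ s in Ioi x, Real.exp (-s ^ 2) := by
      have h1 : (0:ℝ) < ∫ s in x..(x+1), Real.exp (-s ^ 2) :=
        intervalIntegral.intervalIntegral_pos_of_pos_on gauss_integrable.intervalIntegrable
          (fun y _ => Real.exp_pos _) (by linarith)
      have h2 : (∫ s in x..(x+1), Real.exp (-s ^ 2)) ≤ ∫ s in Ioi x, Real.exp (-s ^ 2) := by
        rw [intervalIntegral.integral_of_le (by linarith)]
        apply setIntegral_mono_set gauss_integrable.integrableOn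
          (Filter.Eventually.of_forall fun y => (Real.exp_pos _).le)
        exact HasSubset.Subset.eventuallyLE (Ioc_subset_Ioi_self.trans (by simp))
      linarith
    have hlt : (∫ s in Ioc (0:ℝ) x, Real.exp (-s ^ 2)) < Real.sqrt Real.pi / 2 := by
      rw [← htot, ← hsplit]; linarith
    have hsq : (0:ℝ) < Real.sqrt Real.pi := Real.sqrt_pos.mpr Real.pi_pos
    rw [div_mul_eq_mul_div, div_lt_one hsq]
    linarith

lemma erfc_pos (x : ℝ) : 0 < erfc x := by
  have := erf_lt_one x; unfold erfc; linarith

/-- The sign of the exact solution identifies the phases: `θ_ex > 0` exactly for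
`x < λ(t)` (liquid), `θ_ex = 0` at `x = λ(t)` (interface), `θ_ex < 0` for `x > λ(t)` (solid). -/
theorem thetaEx_sign (Fo θl θr lam0 : ℝ) (hFo : 0 < Fo) (hθl : 0 < θl) (hθr : θr < 0)
    (hlam0 : 0 < lam0) :
    ∀ t : ℝ, 0 < t → ∀ x : ℝ, 0 ≤ x →
      (x < interface Fo lam0 t → 0 < thetaEx Fo θl θr lam0 t x) ∧
      (x = interface Fo lam0 t → thetaEx Fo θl θr lam0 t x = 0) ∧
      (interface Fo lam0 t < x → thetaEx Fo θl θr lam0 t x < 0) := by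
  intro t ht x hx
  have hS : (0:ℝ) < 2 * Real.sqrt (t * Fo) := by positivity
  have hiface : interface Fo lam0 t = lam0 * (2 * Real.sqrt (t * Fo)) := by
    unfold interface; ring
  have herfl : 0 < erf lam0 := erf_pos hlam0
  refine ⟨?_, ?_, ?_⟩
  · intro hlt
    have hξ : x / (2 * Real.sqrt (t * Fo)) < lam0 := by
      rw [div_lt_iff₀ hS]; rw [hiface] at hlt; linarith
    have h1 : erf (x / (2 * Real.sqrt (t * Fo))) < erf lam0 := erf_strictMono hξ
    have h2 : erf (x / (2 * Real.sqrt (t * Fo))) / erf lam0 < 1 :=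
      (div_lt_one herfl).mpr h1
    rw [thetaEx, if_pos hlt.le, thetaLeft]
    exact mul_pos hθl (by linarith)
  · intro heq
    have hξ : x / (2 * Real.sqrt (t * Fo)) = lam0 := by
      rw [heq, hiface, mul_div_assoc, div_self hS.ne', mul_one]
    rw [thetaEx, if_pos heq.le, thetaLeft, hξ, div_self herfl.ne']
    ring
  · intro hlt
    have hξ : lam0 < x / (2 * Real.sqrt (t * Fo)) := by
      rw [lt_div_iff₀ hS]; rw [hiface] at hlt; linarith
    have h1 : erf lam0 < erf (x / (2 * Real.sqrt (t * Fo))) := erf_strictMono hξ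
    have h2 : erfc (x / (2 * Real.sqrt (t * Fo))) / erfc lam0 < 1 := by
      rw [div_lt_one (erfc_pos lam0)]; unfold erfc; linarith
    rw [thetaEx, if_neg (not_le.mpr hlt), thetaRight]
    exact mul_neg_of_neg_of_pos hθr (by linarith)
end
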